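/- Let V be an additive abelian group, R a field, and [·] : V → R a function with [−u] = −[u]. Suppose the Fay identity holds: for all u ∈ V and all a,b,c,d in an index set S with 'abelian integral' map v : S × S → V satisfying v(a,c) + v(c,b) = v(a,b) and v(a,b) = −v(b,a): [u + v(a,c)]·[u + v(b,d)]·[v(c,b)]·[v(a,d)] + [u + v(b,c)]·[u + v(a,d)]·[v(a,c)]·[v(b,d)] = [u]·[u + v(a,c) + v(b,d)]·[v(c,d)]·[v(a,b)]. Then for any n, points a_k, b_k, c_k, d_k ∈ S and z_k ∈ V (k = 0,…,n), the multiparameter summation formula holds: ∑_{k=0}^{n} W_k ∏_{j<k} G_j ∏_{j>k} H_j = ∏_{k=0}^{n} G_k − ∏_{k=0}^{n} H_k, where W_k = [z_k+v(b_k,c_k)][z_k+v(a_k,d_k)][v(a_k,c_k)][v(b_k,d_k)], G_k = [z_k][z_k+v(a_k,c_k)+v(b_k,d_k)][v(c_k,d_k)][v(a_k,b_k)], H_k = [z_k+v(a_k,c_k)][z_k+v(b_k,d_k)][v(c_k,b_k)][v(a_k,d_k)]. -/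

import Mathlib

/-!
Fay's identity says exactly that each summand's weight `W k` equals `G k - H k`. The sum is then
telescoping: its `k`-th term is `A (k + 1) - A k` for `A k = (∏ j < k, G j) * ∏ k ≤ j ≤ n, H j`,
so it equals `A (n + 1) - A 0 = ∏ G - ∏ H`.
-/

open Finset

theorem Finset.sum_sub_mul_prod_range_mul_prod_Ioc {R : Type*} [CommRing R] (G H : ℕ → R)
    (n : ℕ) :
    ∑ k ∈ range (n + 1), (G k - H k) * (∏ j ∈ range k, G j) * ∏ j ∈ Ioc k n, H j =
      ∏ k ∈ range (n + 1), G k - ∏ k ∈ range (n + 1), H k := by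
  set A : ℕ → R := fun k => (∏ j ∈ range k, G j) * ∏ j ∈ Ico k (n + 1), H j
  have hterm : ∀ k ∈ range (n + 1),
      (G k - H k) * (∏ j ∈ range k, G j) * ∏ j ∈ Ioc k n, H j = A (k + 1) - A k := by
    intro k hk
    have hIco : ∏ j ∈ Ico k (n + 1), H j = H k * ∏ j ∈ Ioc k n, H j := by
      rw [prod_eq_prod_Ico_succ_bot (mem_range.mp hk), Ico_add_one_add_one_eq_Ioc]
    simp only [A, hIco, prod_range_succ, Ico_add_one_add_one_eq_Ioc]
    ring
  rw [sum_congr rfl hterm, sum_range_sub]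
  simp [A]

theorem riemann_theta_multiparameter_sum_general
    (V : Type*) [AddCommGroup V] (R : Type*) [Field R] (S : Type*)
    (br : V → R) (v : S → S → V)
    (hFay : ∀ (u : V) (a b c d : S),
      br (u + v a c) * br (u + v b d) * br (v c b) * br (v a d) +
        br (u + v b c) * br (u + v a d) * br (v a c) * br (v b d)
      = br u * br (u + v a c + v b d) * br (v c d) * br (v a b))
    (n : ℕ) (a b c d : ℕ → S) (z : ℕ → V) :
    ∑ k ∈ Finset.range (n + 1),
      (br (z k + v (b k) (c k)) * br (z k + v (a k) (d k)) *
          br (v (a k) (c k)) * br (v (b k) (d k))) *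
        (∏ j ∈ Finset.range k,
          br (z j) * br (z j + v (a j) (c j) + v (b j) (d j)) *
            br (v (c j) (d j)) * br (v (a j) (b j))) *
        (∏ j ∈ Finset.Ioc k n,
          br (z j + v (a j) (c j)) * br (z j + v (b j) (d j)) *
            br (v (c j) (b j)) * br (v (a j) (d j)))
    = (∏ k ∈ Finset.range (n + 1),
        br (z k) * br (z k + v (a k) (c k) + v (b k) (d k)) *
          br (v (c k) (d k)) * br (v (a k) (b k)))
      - ∏ k ∈ Finset.range (n + 1),
        br (z k + v (a k) (c k)) * br (z k + v (b k) (d k)) *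
          br (v (c k) (b k)) * br (v (a k) (d k)) := by
  convert sum_sub_mul_prod_range_mul_prod_Ioc
    (fun k => br (z k) * br (z k + v (a k) (c k) + v (b k) (d k)) *
      br (v (c k) (d k)) * br (v (a k) (b k)))
    (fun k => br (z k + v (a k) (c k)) * br (z k + v (b k) (d k)) *
      br (v (c k) (b k)) * br (v (a k) (d k))) n using 4 with k
  exact eq_sub_of_add_eq' (hFay (z k) (a k) (b k) (c k) (d k))

theorem riemann_theta_multiparameter_sum
    (V : Type*) [AddCommGroup V] (R : Type*) [Field R] (S : Type*)
    (br : V → R) (v : S → S → V)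
    (hodd : ∀ u : V, br (-u) = -br u)
    (hcocycle : ∀ a b c : S, v a c + v c b = v a b)
    (hanti : ∀ a b : S, v a b = -v b a)
    (hFay : ∀ (u : V) (a b c d : S),
      br (u + v a c) * br (u + v b d) * br (v c b) * br (v a d) +
        br (u + v b c) * br (u + v a d) * br (v a c) * br (v b d)
      = br u * br (u + v a c + v b d) * br (v c d) * br (v a b))
    (n : ℕ) (a b c d : ℕ → S) (z : ℕ → V) :
    ∑ k ∈ Finset.range (n + 1),
      (br (z k + v (b k) (c k)) * br (z k + v (a k) (d k)) *
          br (v (a k) (c k)) * br (v (b k) (d k))) *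
        (∏ j ∈ Finset.range k,
          br (z j) * br (z j + v (a j) (c j) + v (b j) (d j)) *
            br (v (c j) (d j)) * br (v (a j) (b j))) *
        (∏ j ∈ Finset.Ioc k n,
          br (z j + v (a j) (c j)) * br (z j + v (b j) (d j)) *
            br (v (c j) (b j)) * br (v (a j) (d j)))
    = (∏ k ∈ Finset.range (n + 1),
        br (z k) * br (z k + v (a k) (c k) + v (b k) (d k)) *
          br (v (c k) (d k)) * br (v (a k) (b k)))
      - ∏ k ∈ Finset.range (n + 1),
        br (z k + v (a k) (c k)) * br (z k + v (b k) (d k)) *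
          br (v (c k) (b k)) * br (v (a k) (d k)) :=
  riemann_theta_multiparameter_sum_general V R S br v hFay n a b c d z
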